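/- Let X_1,…,X_n be independent, g_i Borel functions with E g_i(X_i) = 0 and Σ E g_i(X_i)^2 = 1, W = Σ g_i(X_i), T = W + Δ, and β = Σ_{i=1}^n E[ g_i(X_i)^2 1{|g_i(X_i)|>1} ] + Σ_{i=1}^n E[ |g_i(X_i)|^3 1{|g_i(X_i)|≤1} ]. With Δ_i as in Theorem 2.1 (X_i independent of (Δ_i, W − g_i(X_i))), one has sup_z |P(T ≤ z) − P(W ≤ z)| ≤ 2β + E|WΔ| + Σ_{i=1}^n E|g_i(X_i)(Δ − Δ_i)|. -/

import Mathlib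

/-!
Stein's method in the form of Chen and Shao's concentration inequality. Put `ξᵢ = gᵢ(Xᵢ)` and
`δ = β / 2` (for `β > 1 / 2` the bound exceeds one and there is nothing to prove), and let `f`
be the function with slope one on `[z - U - δ, z + V + δ]`, constant outside and centred, so
that `|f| ≤ (U + V) / 2 + δ`. Write `E[W f(W)] = ∑ E[ξᵢ (f(W) - fᵢ(W - ξᵢ))]`, where `fᵢ` is
built from the leave-one-out widths `Uᵢ, Vᵢ`; the subtracted terms have mean zero because `ξᵢ`
is independent of `(Uᵢ, Vᵢ, W - ξᵢ)`. Since `f` is monotone with slope one on the window,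
`ξᵢ (f(W) - f(W - ξᵢ)) ≥ 1{z - U < W ≤ z + V} |ξᵢ| min(|ξᵢ|, δ)`, and replacing `(U, V)` by
`(Uᵢ, Vᵢ)` costs at most `(|U - Uᵢ| + |V - Vᵢ|) |ξᵢ| / 2`. The sum `H = ∑ |ξᵢ| min(|ξᵢ|, δ)` has
mean at least `1 / 2` and variance at most `δ β`, so `P(z - U < W ≤ z + V) / 2` is bounded by
`E[W f(W)] + E[(EH - H)⁺]` plus the cost of replacing the widths, which gives
`P(z - U < W ≤ z + V) ≤ 2β + E[(U + V)|W|] + ∑ E[(|U - Uᵢ| + |V - Vᵢ|) |ξᵢ|]`.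

The events `{T ≤ z}` and `{W ≤ z}` differ only where `z - Δ⁺ < W ≤ z + Δ⁻`, so the theorem is
this bound with `U = Δ⁺`, `V = Δ⁻`, truncated at a level `m → ∞` to keep them bounded.
-/

open MeasureTheory ProbabilityTheory

-- `f(w) = steinTest (U + δ) (V + δ) (w - z)` in the notation above.
noncomputable def steinTest (a b x : ℝ) : ℝ := max (-a) (min x b) - (b - a) / 2

lemma abs_steinTest_le {a b : ℝ} (ha : 0 ≤ a) (hb : 0 ≤ b) (x : ℝ) :
    |steinTest a b x| ≤ (a + b) / 2 := by
  have hlo : -a ≤ max (-a) (min x b) := le_max_left _ _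
  have hhi : max (-a) (min x b) ≤ b := max_le (by linarith) (min_le_right _ _)
  rw [steinTest, abs_le]
  constructor <;> linarith

lemma norm_steinTest_add_le {a b M δ : ℝ} (ha : a ∈ Set.Icc 0 M) (hb : b ∈ Set.Icc 0 M)
    (hδ : 0 ≤ δ) (x : ℝ) : ‖steinTest (a + δ) (b + δ) x‖ ≤ M + δ := by
  have := abs_steinTest_le (by linarith [ha.1] : 0 ≤ a + δ) (by linarith [hb.1] : 0 ≤ b + δ) x
  rw [Real.norm_eq_abs]
  linarith [ha.2, hb.2]

lemma monotone_steinTest (a b : ℝ) : Monotone (steinTest a b) := fun x y hxy => by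
  unfold steinTest
  gcongr

lemma Monotone.abs_sub_sub_half_le {φ : ℝ → ℝ} (hφ : Monotone φ) (hlip : LipschitzWith 1 φ)
    (x y : ℝ) : |φ x - φ y - (x - y) / 2| ≤ |x - y| / 2 := by
  have hdist := hlip.dist_le_mul x y
  simp only [NNReal.coe_one, one_mul, Real.dist_eq] at hdist
  rcases le_total x y with h | h
  · have := hφ h
    rw [abs_of_nonpos (by linarith : φ x - φ y ≤ 0), abs_of_nonpos (by linarith : x - y ≤ 0)]
      at hdist
    rw [abs_of_nonpos (by linarith : x - y ≤ 0), abs_le]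
    constructor <;> linarith
  · have := hφ h
    rw [abs_of_nonneg (by linarith : 0 ≤ φ x - φ y), abs_of_nonneg (by linarith : 0 ≤ x - y)]
      at hdist
    rw [abs_of_nonneg (by linarith : 0 ≤ x - y), abs_le]
    constructor <;> linarith

lemma abs_steinTest_sub_steinTest_le (a b a' b' x : ℝ) :
    |steinTest a b x - steinTest a' b' x| ≤ (|a - a'| + |b - b'|) / 2 := by
  have hb := Monotone.abs_sub_sub_half_le (φ := fun s => max (-a) (min x s))
    (fun s s' h => by dsimp only; gcongr) ((LipschitzWith.id.const_min x).const_max (-a)) b b'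
  have ha := Monotone.abs_sub_sub_half_le (φ := fun s => -max (-s) (min x b'))
    (fun s s' h => by dsimp only; gcongr) (LipschitzWith.id.neg.max_const (min x b')).neg a a'
  have hsplit : steinTest a b x - steinTest a' b' x =
      (max (-a) (min x b) - max (-a) (min x b') - (b - b') / 2) -
        (-max (-a) (min x b') - -max (-a') (min x b') - (a - a') / 2) := by
    unfold steinTest; ring
  rw [hsplit]
  exact (abs_sub _ _).trans (by linarith)

lemma mul_sub_steinTest_nonneg (a b x t : ℝ) :
    0 ≤ t * (steinTest a b x - steinTest a b (x - t)) := by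
  rcases le_total 0 t with ht | ht
  · exact mul_nonneg ht (sub_nonneg.2 (monotone_steinTest a b (by linarith)))
  · exact mul_nonneg_of_nonpos_of_nonpos ht (sub_nonpos.2 (monotone_steinTest a b (by linarith)))

noncomputable def steinGain (δ t : ℝ) : ℝ := |t| * min |t| δ

lemma steinGain_nonneg {δ : ℝ} (hδ : 0 ≤ δ) (t : ℝ) : 0 ≤ steinGain δ t :=
  mul_nonneg (abs_nonneg t) (le_min (abs_nonneg t) hδ)

lemma steinGain_le (δ t : ℝ) : steinGain δ t ≤ δ * |t| := by
  rw [steinGain, mul_comm δ]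
  exact mul_le_mul_of_nonneg_left (min_le_right _ _) (abs_nonneg t)

lemma steinGain_le_mul_sub_steinTest {δ a b x : ℝ} (hδ : 0 ≤ δ) (h₁ : δ - a < x)
    (h₂ : x ≤ b - δ) (t : ℝ) :
    steinGain δ t ≤ t * (steinTest a b x - steinTest a b (x - t)) := by
  have hx : max (-a) (min x b) = x := by
    rw [min_eq_left (by linarith), max_eq_right (by linarith)]
  unfold steinGain steinTest
  rw [hx]
  rcases le_total 0 t with ht | ht
  · rw [abs_of_nonneg ht]
    refine mul_le_mul_of_nonneg_left ?_ ht
    rw [min_eq_left (by linarith : x - t ≤ b)]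
    rcases le_total (-a) (x - t) with h | h
    · rw [max_eq_right h]; linarith [min_le_left t δ]
    · rw [max_eq_left h]; linarith [min_le_right t δ]
  · rw [abs_of_nonpos ht]
    have hmin : min (-t) δ ≤ min (x - t) b - x := by
      rcases le_total (x - t) b with h | h
      · rw [min_eq_left h]; linarith [min_le_left (-t) δ]
      · rw [min_eq_right h]; linarith [min_le_right (-t) δ]
    rw [max_eq_right (by rw [le_min_iff]; constructor <;> linarith : -a ≤ min (x - t) b)]
    nlinarith

lemma ite_steinGain_le {δ z u v u' v' w t : ℝ} (hδ : 0 ≤ δ) :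
    (if w ∈ Set.Ioc (z - u) (z + v) then steinGain δ t else 0) ≤
      t * steinTest (u + δ) (v + δ) (w - z) - t * steinTest (u' + δ) (v' + δ) (w - t - z) +
        (|u - u'| + |v - v'|) / 2 * |t| := by
  have hgain : (if w ∈ Set.Ioc (z - u) (z + v) then steinGain δ t else 0) ≤
      t * (steinTest (u + δ) (v + δ) (w - z) - steinTest (u + δ) (v + δ) (w - z - t)) := by
    split_ifs with h
    · exact steinGain_le_mul_sub_steinTest hδ (by linarith [h.1]) (by linarith [h.2]) t
    · exact mul_sub_steinTest_nonneg _ _ _ t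
  have hlip : |t * (steinTest (u + δ) (v + δ) (w - t - z) -
      steinTest (u' + δ) (v' + δ) (w - t - z))| ≤ (|u - u'| + |v - v'|) / 2 * |t| := by
    rw [abs_mul, mul_comm]
    refine mul_le_mul_of_nonneg_right ?_ (abs_nonneg t)
    simpa only [add_sub_add_right_eq_sub] using
      abs_steinTest_sub_steinTest_le (u + δ) (v + δ) (u' + δ) (v' + δ) (w - t - z)
  rw [sub_right_comm w z t] at hgain
  linarith [neg_abs_le (t * (steinTest (u + δ) (v + δ) (w - t - z) -
      steinTest (u' + δ) (v' + δ) (w - t - z)))]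

noncomputable def lindebergTerm (t : ℝ) : ℝ :=
  t ^ 2 * (if |t| > 1 then 1 else 0) + |t| ^ 3 * (if |t| ≤ 1 then 1 else 0)

lemma lindebergTerm_of_abs_le_one {t : ℝ} (h : |t| ≤ 1) : lindebergTerm t = |t| ^ 3 := by
  simp [lindebergTerm, h, not_lt.2 h]

lemma lindebergTerm_of_one_lt_abs {t : ℝ} (h : 1 < |t|) : lindebergTerm t = |t| ^ 2 := by
  simp [lindebergTerm, h, not_le.2 h]

lemma lindebergTerm_nonneg (t : ℝ) : 0 ≤ lindebergTerm t := by
  unfold lindebergTerm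
  split_ifs <;> positivity

lemma four_mul_sq_le {δ : ℝ} (hδ : 0 ≤ δ) (hδ4 : 4 * δ ≤ 1) (t : ℝ) :
    4 * δ * t ^ 2 ≤ 4 * δ * steinGain δ t + lindebergTerm t := by
  have hg := steinGain_nonneg hδ t
  rw [← sq_abs t]
  rcases le_or_gt |t| 1 with h1 | h1
  · rw [lindebergTerm_of_abs_le_one h1, steinGain]
    rcases le_total |t| δ with h | h
    · rw [min_eq_left h]; nlinarith [abs_nonneg t]
    · rw [min_eq_right h]; nlinarith [abs_nonneg t, sq_nonneg (|t| - 2 * δ)]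
  · rw [lindebergTerm_of_one_lt_abs h1]
    nlinarith [mul_nonneg (sub_nonneg.2 hδ4) (sq_nonneg |t|)]

lemma steinGain_sq_le {δ : ℝ} (hδ : 0 ≤ δ) (hδ1 : δ ≤ 1) (t : ℝ) :
    steinGain δ t ^ 2 ≤ δ * lindebergTerm t := by
  have h0 : 0 ≤ min |t| δ := le_min (abs_nonneg t) hδ
  have hl : min |t| δ ≤ |t| := min_le_left _ _
  have hr : min |t| δ ≤ δ := min_le_right _ _
  rw [steinGain, mul_pow]
  rcases le_or_gt |t| 1 with h1 | h1
  · rw [lindebergTerm_of_abs_le_one h1]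
    have : min |t| δ ^ 2 ≤ δ * |t| := by nlinarith
    nlinarith [sq_nonneg |t|]
  · rw [lindebergTerm_of_one_lt_abs h1]
    have : min |t| δ ^ 2 ≤ δ := by nlinarith
    nlinarith [sq_nonneg |t|]

noncomputable def truncPosPart (m y : ℝ) : ℝ := min (max y 0) m

lemma truncPosPart_mem_Icc {m : ℝ} (hm : 0 ≤ m) (y : ℝ) : truncPosPart m y ∈ Set.Icc 0 m :=
  ⟨le_min (le_max_right _ _) hm, min_le_right _ _⟩

lemma truncPosPart_eq_of_abs_le {m y : ℝ} (h : |y| ≤ m) : truncPosPart m y = max y 0 :=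
  min_eq_left (max_le (le_abs_self y |>.trans h) ((abs_nonneg y).trans h))

lemma truncPosPart_of_nonpos (m : ℝ) {y : ℝ} (hy : y ≤ 0) :
    truncPosPart m y = truncPosPart m 0 := by
  simp [truncPosPart, max_eq_right hy]

lemma monotone_truncPosPart (y : ℝ) : Monotone fun m : ℕ => truncPosPart m y :=
  fun m m' h => min_le_min le_rfl (by exact_mod_cast h)

lemma truncPosPart_add_truncPosPart_neg_le_abs (m y : ℝ) :
    truncPosPart m y + truncPosPart m (-y) ≤ |y| := by
  unfold truncPosPart
  rcases le_total 0 y with h | h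
  · rw [abs_of_nonneg h, max_eq_right (by linarith : -y ≤ 0), max_eq_left h]
    linarith [min_le_left y m, min_le_left (0 : ℝ) m]
  · rw [abs_of_nonpos h, max_eq_right h, max_eq_left (by linarith : 0 ≤ -y)]
    linarith [min_le_left (-y) m, min_le_left (0 : ℝ) m]

lemma abs_truncPosPart_sub_le (m a b : ℝ) : |truncPosPart m a - truncPosPart m b| ≤ |a - b| := by
  simpa [Real.dist_eq, truncPosPart] using
    ((LipschitzWith.id.max_const 0).min_const m).dist_le_mul a b

lemma abs_truncPosPart_sub_add_le (m a b : ℝ) :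
    |truncPosPart m a - truncPosPart m b| + |truncPosPart m (-a) - truncPosPart m (-b)| ≤
      |a - b| := by
  rcases le_total 0 a with ha | ha <;> rcases le_total 0 b with hb | hb
  · rw [truncPosPart_of_nonpos m (neg_nonpos.2 ha), truncPosPart_of_nonpos m (neg_nonpos.2 hb),
      sub_self, abs_zero, add_zero]
    exact abs_truncPosPart_sub_le m a b
  · rw [truncPosPart_of_nonpos m hb, truncPosPart_of_nonpos m (neg_nonpos.2 ha),
      abs_of_nonneg (by linarith : 0 ≤ a - b)]
    have h₁ := abs_truncPosPart_sub_le m a 0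
    have h₂ := abs_truncPosPart_sub_le m 0 (-b)
    rw [sub_zero, abs_of_nonneg ha] at h₁
    rw [zero_sub, neg_neg, abs_of_nonpos hb] at h₂
    linarith
  · rw [truncPosPart_of_nonpos m ha, truncPosPart_of_nonpos m (neg_nonpos.2 hb),
      abs_of_nonpos (by linarith : a - b ≤ 0)]
    have h₁ := abs_truncPosPart_sub_le m 0 b
    have h₂ := abs_truncPosPart_sub_le m (-a) 0
    rw [zero_sub, abs_neg, abs_of_nonneg hb] at h₁
    rw [sub_zero, abs_neg, abs_of_nonpos ha] at h₂
    linarith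
  · rw [truncPosPart_of_nonpos m ha, truncPosPart_of_nonpos m hb, sub_self, abs_zero, zero_add]
    simpa [neg_add_eq_sub, abs_sub_comm] using abs_truncPosPart_sub_le m (-a) (-b)

lemma symmDiff_setOf_le_subset_iUnion {Ω : Type*} (W Δ : Ω → ℝ) (z : ℝ) :
    symmDiff {ω | W ω + Δ ω ≤ z} {ω | W ω ≤ z} ⊆
      ⋃ m : ℕ, {ω | W ω ∈ Set.Ioc (z - truncPosPart m (Δ ω)) (z + truncPosPart m (-Δ ω))} := by
  intro ω hω
  have hm : |Δ ω| ≤ (⌈|Δ ω|⌉₊ : ℝ) := Nat.le_ceil _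
  refine Set.mem_iUnion.2 ⟨⌈|Δ ω|⌉₊, ?_⟩
  rw [Set.mem_ofPred_eq, truncPosPart_eq_of_abs_le hm,
    truncPosPart_eq_of_abs_le (by rwa [abs_neg])]
  have := le_max_left (Δ ω) 0
  have := le_max_right (Δ ω) 0
  have := le_max_left (-Δ ω) 0
  have := le_max_right (-Δ ω) 0
  rcases Set.mem_symmDiff.1 hω with ⟨h₁, h₂⟩ | ⟨h₁, h₂⟩ <;>
    simp only [Set.mem_ofPred_eq, not_le] at h₁ h₂ <;> constructor <;> linarith

@[fun_prop]
lemma Measurable.steinTest {α : Type*} [MeasurableSpace α] {a b x : α → ℝ} (ha : Measurable a)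
    (hb : Measurable b) (hx : Measurable x) :
    Measurable fun ω => steinTest (a ω) (b ω) (x ω) := by
  unfold _root_.steinTest; fun_prop

@[fun_prop]
lemma measurable_steinGain (δ : ℝ) : Measurable (steinGain δ) := by
  unfold steinGain; fun_prop

@[fun_prop]
lemma measurable_truncPosPart (m : ℝ) : Measurable (truncPosPart m) := by
  unfold truncPosPart; fun_prop

section MeasureSpace

variable {Ω : Type*} [MeasurableSpace Ω] {μ : Measure Ω}

lemma integrable_lindebergTerm_parts {t : Ω → ℝ} (ht : Measurable t) (ht2 : MemLp t 2 μ) :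
    Integrable (fun ω => t ω ^ 2 * (if |t ω| > 1 then 1 else 0)) μ ∧
      Integrable (fun ω => |t ω| ^ 3 * (if |t ω| ≤ 1 then 1 else 0)) μ := by
  refine ⟨ht2.integrable_sq.mono' ((ht.pow_const 2).mul (Measurable.ite (measurableSet_lt
      measurable_const ht.abs) measurable_const measurable_const)).aestronglyMeasurable
      (ae_of_all _ fun ω => by split_ifs <;> simp [sq_nonneg]),
    ht2.integrable_sq.mono' ((ht.abs.pow_const 3).mul (Measurable.ite (measurableSet_le ht.abs
      measurable_const) measurable_const measurable_const)).aestronglyMeasurable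
      (ae_of_all _ fun ω => ?_)⟩
  split_ifs with h
  · rw [mul_one, norm_pow, Real.norm_eq_abs, abs_abs, ← sq_abs]
    nlinarith [abs_nonneg (t ω), sq_nonneg |t ω|]
  · simp [sq_nonneg]

lemma integrable_lindebergTerm {t : Ω → ℝ} (ht : Measurable t) (ht2 : MemLp t 2 μ) :
    Integrable (fun ω => lindebergTerm (t ω)) μ :=
  (integrable_lindebergTerm_parts ht ht2).1.add (integrable_lindebergTerm_parts ht ht2).2

lemma integral_lindebergTerm {t : Ω → ℝ} (ht : Measurable t) (ht2 : MemLp t 2 μ) :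
    ∫ ω, lindebergTerm (t ω) ∂μ = ∫ ω, t ω ^ 2 * (if |t ω| > 1 then 1 else 0) ∂μ +
      ∫ ω, |t ω| ^ 3 * (if |t ω| ≤ 1 then 1 else 0) ∂μ :=
  integral_add (integrable_lindebergTerm_parts ht ht2).1 (integrable_lindebergTerm_parts ht ht2).2

lemma integrable_steinGain {t : Ω → ℝ} (ht : Measurable t) (ht1 : Integrable t μ) {δ : ℝ}
    (hδ : 0 ≤ δ) : Integrable (fun ω => steinGain δ (t ω)) μ :=
  ht1.abs.mul_bdd (c := δ) (Measurable.aestronglyMeasurable (by fun_prop))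
    (ae_of_all _ fun ω => by
      rw [Real.norm_of_nonneg (le_min (abs_nonneg _) hδ)]
      exact min_le_right _ _)

lemma memLp_steinGain {t : Ω → ℝ} (ht : Measurable t) (ht2 : MemLp t 2 μ) {δ : ℝ}
    (hδ : 0 ≤ δ) : MemLp (fun ω => steinGain δ (t ω)) 2 μ :=
  (ht2.const_mul δ).of_le ((measurable_steinGain δ).comp ht).aestronglyMeasurable
    (ae_of_all _ fun ω => by
      rw [Real.norm_of_nonneg (steinGain_nonneg hδ _), Real.norm_eq_abs, abs_mul,
        abs_of_nonneg hδ]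
      exact steinGain_le δ _)

lemma integral_indicator_steinGain_le {t w u v u' v' : Ω → ℝ} {M δ : ℝ} (hδ : 0 ≤ δ) (z : ℝ)
    (ht : Measurable t) (ht1 : Integrable t μ) (hmean : μ[t] = 0) (hw : Measurable w)
    (hu : Measurable u) (hv : Measurable v) (hu' : Measurable u') (hv' : Measurable v')
    (huM : ∀ ω, u ω ∈ Set.Icc 0 M) (hvM : ∀ ω, v ω ∈ Set.Icc 0 M)
    (hu'M : ∀ ω, u' ω ∈ Set.Icc 0 M) (hv'M : ∀ ω, v' ω ∈ Set.Icc 0 M)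
    (hindep : t ⟂ᵢ[μ] fun ω => (u' ω, v' ω, w ω - t ω)) :
    ∫ ω, {ω | w ω ∈ Set.Ioc (z - u ω) (z + v ω)}.indicator (fun ω => steinGain δ (t ω)) ω ∂μ ≤
      ∫ ω, t ω * steinTest (u ω + δ) (v ω + δ) (w ω - z) ∂μ +
        (∫ ω, (|u ω - u' ω| + |v ω - v' ω|) * |t ω| ∂μ) / 2 := by
  have hf : Integrable (fun ω => t ω * steinTest (u ω + δ) (v ω + δ) (w ω - z)) μ :=
    ht1.mul_bdd (Measurable.aestronglyMeasurable (by fun_prop))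
      (ae_of_all _ fun ω => norm_steinTest_add_le (huM ω) (hvM ω) hδ _)
  have hf' : Integrable (fun ω => t ω * steinTest (u' ω + δ) (v' ω + δ) (w ω - t ω - z)) μ :=
    ht1.mul_bdd (Measurable.aestronglyMeasurable (by fun_prop))
      (ae_of_all _ fun ω => norm_steinTest_add_le (hu'M ω) (hv'M ω) hδ _)
  have hdiff : Integrable (fun ω => t ω * steinTest (u ω + δ) (v ω + δ) (w ω - z) -
      t ω * steinTest (u' ω + δ) (v' ω + δ) (w ω - t ω - z)) μ := hf.sub hf'
  have hL : Integrable (fun ω => (|u ω - u' ω| + |v ω - v' ω|) / 2 * |t ω|) μ :=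
    ht1.abs.bdd_mul (c := M) (Measurable.aestronglyMeasurable (by fun_prop))
      (ae_of_all _ fun ω => by
        have hu := abs_sub_le_of_nonneg_of_le (huM ω).1 (huM ω).2 (hu'M ω).1 (hu'M ω).2
        have hv := abs_sub_le_of_nonneg_of_le (hvM ω).1 (hvM ω).2 (hv'M ω).1 (hv'M ω).2
        rw [Real.norm_of_nonneg (by positivity)]
        linarith)
  have hG : Integrable (fun ω => {ω | w ω ∈ Set.Ioc (z - u ω) (z + v ω)}.indicator
      (fun ω => steinGain δ (t ω)) ω) μ :=
    (integrable_steinGain ht ht1 hδ).indicator (by measurability)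
  have hloo : ∫ ω, t ω * steinTest (u' ω + δ) (v' ω + δ) (w ω - t ω - z) ∂μ = 0 := by
    have hφ : Measurable fun p : ℝ × ℝ × ℝ => steinTest (p.1 + δ) (p.2.1 + δ) (p.2.2 - z) := by
      fun_prop
    simpa [hmean] using (hindep.comp measurable_id hφ).integral_mul_eq_mul_integral
      ht1.aestronglyMeasurable (hφ.comp (hu'.prodMk (hv'.prodMk (hw.sub ht)))).aestronglyMeasurable
  calc _ ≤ ∫ ω, (t ω * steinTest (u ω + δ) (v ω + δ) (w ω - z) -
        t ω * steinTest (u' ω + δ) (v' ω + δ) (w ω - t ω - z) +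
        (|u ω - u' ω| + |v ω - v' ω|) / 2 * |t ω|) ∂μ := by
        refine integral_mono hG (hdiff.add hL) fun ω => ?_
        simpa only [Set.indicator_apply, Set.mem_ofPred_eq] using ite_steinGain_le hδ
    _ = _ := by
        rw [integral_add hdiff hL, integral_sub hf hf', hloo, sub_zero, ← integral_div]
        simp_rw [div_mul_eq_mul_div]

lemma measureReal_le_of_subset_iUnion [IsFiniteMeasure μ] {s : Set Ω} {B : ℕ → Set Ω} {C : ℝ}
    (hB : Monotone B) (hs : s ⊆ ⋃ m, B m) (hC : ∀ m, μ.real (B m) ≤ C) : μ.real s ≤ C := by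
  have hC0 : 0 ≤ C := measureReal_nonneg.trans (hC 0)
  refine (measureReal_mono hs).trans ?_
  rw [measureReal_def, hB.measure_iUnion]
  exact ENNReal.toReal_le_of_le_ofReal hC0
    (iSup_le fun m => (ENNReal.le_ofReal_iff_toReal_le (measure_ne_top _ _) hC0).2 (hC m))

lemma integral_mul_steinTest_le {W U V : Ω → ℝ} {M δ : ℝ} (hδ : 0 ≤ δ) (z : ℝ)
    (hWm : Measurable W) (hW : Integrable W μ) (hU : Measurable U) (hV : Measurable V)
    (hUM : ∀ ω, U ω ∈ Set.Icc 0 M) (hVM : ∀ ω, V ω ∈ Set.Icc 0 M) :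
    ∫ ω, W ω * steinTest (U ω + δ) (V ω + δ) (W ω - z) ∂μ ≤
      (∫ ω, (U ω + V ω) * |W ω| ∂μ) / 2 + δ * ∫ ω, |W ω| ∂μ := by
  have hUV : Integrable (fun ω => (U ω + V ω) * |W ω|) μ :=
    hW.abs.bdd_mul (c := 2 * M) (by fun_prop) (ae_of_all _ fun ω => by
      rw [Real.norm_of_nonneg (by linarith [(hUM ω).1, (hVM ω).1])]
      linarith [(hUM ω).2, (hVM ω).2])
  rw [← integral_div, ← integral_const_mul,
    ← integral_add (hUV.div_const 2) (hW.abs.const_mul δ)]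
  refine integral_mono (hW.mul_bdd (Measurable.aestronglyMeasurable (by fun_prop))
    (ae_of_all _ fun ω => norm_steinTest_add_le (hUM ω) (hVM ω) hδ _))
    ((hUV.div_const 2).add (hW.abs.const_mul δ)) fun ω => ?_
  have := abs_steinTest_le (by linarith [(hUM ω).1] : 0 ≤ U ω + δ)
    (by linarith [(hVM ω).1] : 0 ≤ V ω + δ) (W ω - z)
  calc W ω * steinTest (U ω + δ) (V ω + δ) (W ω - z)
      ≤ |W ω| * |steinTest (U ω + δ) (V ω + δ) (W ω - z)| := by
        rw [← abs_mul]; exact le_abs_self _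
    _ ≤ |W ω| * ((U ω + V ω) / 2 + δ) := by gcongr; linarith
    _ = _ := by ring

variable {ι : Type*} [Fintype ι] {ξ : ι → Ω → ℝ}

lemma integral_indicator_sum_steinGain_le (hξ : ∀ i, Measurable (ξ i))
    (hξ1 : ∀ i, Integrable (ξ i) μ) (hmean : ∀ i, μ[ξ i] = 0)
    {U V : Ω → ℝ} {Ui Vi : ι → Ω → ℝ} {M : ℝ} (hU : Measurable U) (hV : Measurable V)
    (hUi : ∀ i, Measurable (Ui i)) (hVi : ∀ i, Measurable (Vi i))
    (hUM : ∀ ω, U ω ∈ Set.Icc 0 M) (hVM : ∀ ω, V ω ∈ Set.Icc 0 M)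
    (hUiM : ∀ i ω, Ui i ω ∈ Set.Icc 0 M) (hViM : ∀ i ω, Vi i ω ∈ Set.Icc 0 M)
    (hloo : ∀ i, ξ i ⟂ᵢ[μ] fun ω => (Ui i ω, Vi i ω, ∑ j, ξ j ω - ξ i ω))
    {δ : ℝ} (hδ : 0 ≤ δ) (z : ℝ) :
    ∫ ω, {ω | ∑ i, ξ i ω ∈ Set.Ioc (z - U ω) (z + V ω)}.indicator
        (fun ω => ∑ i, steinGain δ (ξ i ω)) ω ∂μ ≤
      (∫ ω, (U ω + V ω) * |∑ i, ξ i ω| ∂μ +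
        ∑ i, ∫ ω, (|U ω - Ui i ω| + |V ω - Vi i ω|) * |ξ i ω| ∂μ) / 2 +
        δ * ∫ ω, |∑ i, ξ i ω| ∂μ := by
  set A := {ω | ∑ i, ξ i ω ∈ Set.Ioc (z - U ω) (z + V ω)}
  set f := fun ω => steinTest (U ω + δ) (V ω + δ) (∑ i, ξ i ω - z)
  have hWm : Measurable fun ω => ∑ i, ξ i ω := by fun_prop
  have hW : Integrable (fun ω => ∑ i, ξ i ω) μ := integrable_finsetSum _ fun i _ => hξ1 i
  have hA : MeasurableSet A := by measurability
  have hξf : ∀ i, Integrable (fun ω => ξ i ω * f ω) μ := fun i =>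
    (hξ1 i).mul_bdd (Measurable.aestronglyMeasurable (by fun_prop))
      (ae_of_all _ fun ω => norm_steinTest_add_le (hUM ω) (hVM ω) hδ _)
  have hWf := integral_mul_steinTest_le (μ := μ) hδ z hWm hW hU hV hUM hVM
  calc ∫ ω, A.indicator (fun ω => ∑ i, steinGain δ (ξ i ω)) ω ∂μ
      = ∑ i, ∫ ω, A.indicator (fun ω => steinGain δ (ξ i ω)) ω ∂μ := by
        rw [← integral_finsetSum _ fun i _ =>
          (integrable_steinGain (hξ i) (hξ1 i) hδ).indicator hA]
        congr 1 with ω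
        simp only [Set.indicator_apply, Finset.sum_ite_irrel, Finset.sum_const_zero]
    _ ≤ ∑ i, (∫ ω, ξ i ω * f ω ∂μ +
          (∫ ω, (|U ω - Ui i ω| + |V ω - Vi i ω|) * |ξ i ω| ∂μ) / 2) :=
        Finset.sum_le_sum fun i _ => integral_indicator_steinGain_le hδ z (hξ i) (hξ1 i)
          (hmean i) hWm hU hV (hUi i) (hVi i) hUM hVM (hUiM i) (hViM i) (hloo i)
    _ = ∫ ω, (∑ i, ξ i ω) * f ω ∂μ +
          (∑ i, ∫ ω, (|U ω - Ui i ω| + |V ω - Vi i ω|) * |ξ i ω| ∂μ) / 2 := by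
        rw [Finset.sum_add_distrib, ← integral_finsetSum _ fun i _ => hξf i, Finset.sum_div]
        simp only [Finset.sum_mul]
    _ ≤ _ := by linarith

variable [IsProbabilityMeasure μ]

lemma two_mul_integral_abs_sub_le {Y : Ω → ℝ} (hY : MemLp Y 2 μ) (s : ℝ) :
    2 * s * ∫ ω, |Y ω - μ[Y]| ∂μ ≤ Var[Y; μ] + s ^ 2 := by
  have hc : MemLp (fun ω => Y ω - μ[Y]) 2 μ := hY.sub (memLp_const _)
  rw [variance_eq_integral hY.aemeasurable, ← integral_const_mul]
  calc ∫ ω, 2 * s * |Y ω - μ[Y]| ∂μ ≤ ∫ ω, ((Y ω - μ[Y]) ^ 2 + s ^ 2) ∂μ := by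
        refine integral_mono ((hc.integrable one_le_two).abs.const_mul _)
          (hc.integrable_sq.add (integrable_const _)) fun ω => ?_
        nlinarith [sq_abs (Y ω - μ[Y]), sq_nonneg (|Y ω - μ[Y]| - s)]
    _ = ∫ ω, (Y ω - μ[Y]) ^ 2 ∂μ + s ^ 2 := by
        rw [integral_add hc.integrable_sq (integrable_const _), integral_const, probReal_univ,
          one_smul]

lemma integral_max_integral_sub_zero {Y : Ω → ℝ} (hY : Integrable Y μ) :
    ∫ ω, max (μ[Y] - Y ω) 0 ∂μ = (∫ ω, |Y ω - μ[Y]| ∂μ) / 2 := by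
  have hpt : ∀ ω, max (μ[Y] - Y ω) 0 = (|Y ω - μ[Y]| + (μ[Y] - Y ω)) / 2 := fun ω => by
    rcases le_total (Y ω) μ[Y] with h | h
    · rw [max_eq_left (by linarith), abs_of_nonpos (by linarith)]; ring
    · rw [max_eq_right (by linarith), abs_of_nonneg (by linarith)]; ring
  have habs : Integrable (fun ω => |Y ω - μ[Y]|) μ := (hY.sub (integrable_const _)).abs
  have hdev : Integrable (fun ω => μ[Y] - Y ω) μ := (integrable_const _).sub hY
  simp_rw [hpt]
  rw [integral_div, integral_add habs hdev, integral_sub (integrable_const _) hY, integral_const,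
    probReal_univ, one_smul, sub_self, add_zero]

lemma measureReal_mul_integral_le {H : Ω → ℝ} (hH : Integrable H μ) {A : Set Ω}
    (hA : MeasurableSet A) :
    μ.real A * μ[H] ≤ ∫ ω, A.indicator H ω ∂μ + ∫ ω, max (μ[H] - H ω) 0 ∂μ := by
  have hdev : Integrable (fun ω => max (μ[H] - H ω) 0) μ :=
    ((integrable_const _).sub hH).pos_part
  rw [← smul_eq_mul, ← integral_indicator_const _ hA, ← integral_add (hH.indicator hA) hdev]
  refine integral_mono ((integrable_const _).indicator hA) ((hH.indicator hA).add hdev)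
    fun ω => ?_
  by_cases hω : ω ∈ A
  · simp only [Set.indicator_of_mem hω]
    linarith [le_max_left (μ[H] - H ω) 0]
  · simp [Set.indicator_of_notMem hω]

lemma integral_abs_sum_le_one (hξ2 : ∀ i, MemLp (ξ i) 2 μ) (hmean : ∀ i, μ[ξ i] = 0)
    (hindep : Pairwise fun i j => ξ i ⟂ᵢ[μ] ξ j) (hvar : ∑ i, ∫ ω, ξ i ω ^ 2 ∂μ = 1) :
    ∫ ω, |∑ i, ξ i ω| ∂μ ≤ 1 := by
  have hW2 : MemLp (∑ i, ξ i) 2 μ := memLp_finsetSum' _ fun i _ => hξ2 i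
  have hmeanW : ∫ ω, ∑ i, ξ i ω ∂μ = 0 := by
    rw [integral_finsetSum _ fun i _ => (hξ2 i).integrable one_le_two]
    exact Finset.sum_eq_zero fun i _ => hmean i
  have hvarW : Var[∑ i, ξ i; μ] = 1 := by
    rw [IndepFun.variance_sum (fun i _ => hξ2 i) fun i _ j _ hij => hindep hij, ← hvar]
    exact Finset.sum_congr rfl fun i _ =>
      variance_of_integral_eq_zero (hξ2 i).aemeasurable (hmean i)
  have := two_mul_integral_abs_sub_le hW2 1
  simp only [hvarW, Finset.sum_apply, hmeanW, sub_zero] at this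
  linarith

lemma variance_sum_steinGain_le (hξ : ∀ i, Measurable (ξ i)) (hξ2 : ∀ i, MemLp (ξ i) 2 μ)
    (hindep : Pairwise fun i j => ξ i ⟂ᵢ[μ] ξ j) {δ : ℝ} (hδ : 0 ≤ δ) (hδ1 : δ ≤ 1) :
    Var[fun ω => ∑ i, steinGain δ (ξ i ω); μ] ≤ δ * ∑ i, ∫ ω, lindebergTerm (ξ i ω) ∂μ := by
  have hsum : (fun ω => ∑ i, steinGain δ (ξ i ω)) = ∑ i, fun ω => steinGain δ (ξ i ω) := by
    ext ω; simp
  rw [hsum, IndepFun.variance_sum (fun i _ => memLp_steinGain (hξ i) (hξ2 i) hδ)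
    fun i _ j _ hij => (hindep hij).comp (measurable_steinGain δ) (measurable_steinGain δ),
    Finset.mul_sum]
  refine Finset.sum_le_sum fun i _ => ?_
  calc Var[fun ω => steinGain δ (ξ i ω); μ] ≤ ∫ ω, steinGain δ (ξ i ω) ^ 2 ∂μ :=
        variance_le_expectation_sq (X := fun ω => steinGain δ (ξ i ω))
          ((measurable_steinGain δ).comp (hξ i)).aestronglyMeasurable
    _ ≤ ∫ ω, δ * lindebergTerm (ξ i ω) ∂μ :=
        integral_mono (memLp_steinGain (hξ i) (hξ2 i) hδ).integrable_sq
          ((integrable_lindebergTerm (hξ i) (hξ2 i)).const_mul δ)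
          fun ω => steinGain_sq_le hδ hδ1 _
    _ = δ * ∫ ω, lindebergTerm (ξ i ω) ∂μ := integral_const_mul _ _

lemma half_le_sum_integral_steinGain (hξ : ∀ i, Measurable (ξ i))
    (hξ2 : ∀ i, MemLp (ξ i) 2 μ) (hvar : ∑ i, ∫ ω, ξ i ω ^ 2 ∂μ = 1) {δ : ℝ} (hδ : 0 < δ)
    (hδ4 : 4 * δ ≤ 1) (hβ : ∑ i, ∫ ω, lindebergTerm (ξ i ω) ∂μ ≤ 2 * δ) :
    1 / 2 ≤ ∑ i, ∫ ω, steinGain δ (ξ i ω) ∂μ := by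
  have hterm : ∀ i, 4 * δ * ∫ ω, ξ i ω ^ 2 ∂μ ≤
      4 * δ * ∫ ω, steinGain δ (ξ i ω) ∂μ + ∫ ω, lindebergTerm (ξ i ω) ∂μ := fun i => by
    have hG := ((memLp_steinGain (hξ i) (hξ2 i) hδ.le).integrable one_le_two).const_mul (4 * δ)
    have hL := integrable_lindebergTerm (hξ i) (hξ2 i)
    rw [← integral_const_mul, ← integral_const_mul, ← integral_add hG hL]
    exact integral_mono ((hξ2 i).integrable_sq.const_mul _) (hG.add hL)
      fun ω => four_mul_sq_le hδ.le hδ4 _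
  have hsum := Finset.sum_le_sum fun i (_ : i ∈ Finset.univ) => hterm i
  rw [← Finset.mul_sum, hvar, Finset.sum_add_distrib, ← Finset.mul_sum] at hsum
  nlinarith

theorem measureReal_sum_mem_Ioc_le_of_delta (hξ : ∀ i, Measurable (ξ i))
    (hξ2 : ∀ i, MemLp (ξ i) 2 μ) (hmean : ∀ i, μ[ξ i] = 0) (hvar : ∑ i, ∫ ω, ξ i ω ^ 2 ∂μ = 1)
    (hindep : Pairwise fun i j => ξ i ⟂ᵢ[μ] ξ j)
    {U V : Ω → ℝ} {Ui Vi : ι → Ω → ℝ} {M : ℝ} (hU : Measurable U) (hV : Measurable V)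
    (hUi : ∀ i, Measurable (Ui i)) (hVi : ∀ i, Measurable (Vi i))
    (hUM : ∀ ω, U ω ∈ Set.Icc 0 M) (hVM : ∀ ω, V ω ∈ Set.Icc 0 M)
    (hUiM : ∀ i ω, Ui i ω ∈ Set.Icc 0 M) (hViM : ∀ i ω, Vi i ω ∈ Set.Icc 0 M)
    (hloo : ∀ i, ξ i ⟂ᵢ[μ] fun ω => (Ui i ω, Vi i ω, ∑ j, ξ j ω - ξ i ω))
    {δ : ℝ} (hδ : 0 < δ) (hδ4 : 4 * δ ≤ 1) (hβ : ∑ i, ∫ ω, lindebergTerm (ξ i ω) ∂μ ≤ 2 * δ)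
    (z : ℝ) :
    μ.real {ω | ∑ i, ξ i ω ∈ Set.Ioc (z - U ω) (z + V ω)} ≤
      4 * δ + ∫ ω, (U ω + V ω) * |∑ i, ξ i ω| ∂μ +
        ∑ i, ∫ ω, (|U ω - Ui i ω| + |V ω - Vi i ω|) * |ξ i ω| ∂μ := by
  set A := {ω | ∑ i, ξ i ω ∈ Set.Ioc (z - U ω) (z + V ω)}
  set H := fun ω => ∑ i, steinGain δ (ξ i ω)
  have hH2 : MemLp H 2 μ := memLp_finsetSum _ fun i _ => memLp_steinGain (hξ i) (hξ2 i) hδ.le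
  have hH : Integrable H μ := hH2.integrable one_le_two
  have hEH : 1 / 2 ≤ μ[H] := by
    rw [integral_finsetSum _ fun i _ =>
      (memLp_steinGain (hξ i) (hξ2 i) hδ.le).integrable one_le_two]
    exact half_le_sum_integral_steinGain hξ hξ2 hvar hδ hδ4 hβ
  have hdev : ∫ ω, max (μ[H] - H ω) 0 ∂μ ≤ 3 * δ / 4 := by
    have hvarH := variance_sum_steinGain_le hξ hξ2 hindep hδ.le (by linarith)
    have hmom := two_mul_integral_abs_sub_le hH2 δ
    rw [integral_max_integral_sub_zero hH]
    nlinarith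
  have hstein := integral_indicator_sum_steinGain_le hξ (fun i => (hξ2 i).integrable one_le_two)
    hmean hU hV hUi hVi hUM hVM hUiM hViM hloo hδ.le z
  have hW := integral_abs_sum_le_one hξ2 hmean hindep hvar
  have hsplit := measureReal_mul_integral_le hH (A := A) (by measurability)
  have hP : μ.real A / 2 ≤ μ.real A * μ[H] := by
    rw [div_eq_mul_one_div]; exact mul_le_mul_of_nonneg_left hEH measureReal_nonneg
  have hδW := mul_le_mul_of_nonneg_left hW hδ.le
  linarith

theorem measureReal_sum_mem_Ioc_le (hξ : ∀ i, Measurable (ξ i))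
    (hξ2 : ∀ i, MemLp (ξ i) 2 μ) (hmean : ∀ i, μ[ξ i] = 0) (hvar : ∑ i, ∫ ω, ξ i ω ^ 2 ∂μ = 1)
    (hindep : Pairwise fun i j => ξ i ⟂ᵢ[μ] ξ j)
    {U V : Ω → ℝ} {Ui Vi : ι → Ω → ℝ} {M : ℝ} (hU : Measurable U) (hV : Measurable V)
    (hUi : ∀ i, Measurable (Ui i)) (hVi : ∀ i, Measurable (Vi i))
    (hUM : ∀ ω, U ω ∈ Set.Icc 0 M) (hVM : ∀ ω, V ω ∈ Set.Icc 0 M)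
    (hUiM : ∀ i ω, Ui i ω ∈ Set.Icc 0 M) (hViM : ∀ i ω, Vi i ω ∈ Set.Icc 0 M)
    (hloo : ∀ i, ξ i ⟂ᵢ[μ] fun ω => (Ui i ω, Vi i ω, ∑ j, ξ j ω - ξ i ω)) (z : ℝ) :
    μ.real {ω | ∑ i, ξ i ω ∈ Set.Ioc (z - U ω) (z + V ω)} ≤
      2 * ∑ i, ∫ ω, lindebergTerm (ξ i ω) ∂μ + ∫ ω, (U ω + V ω) * |∑ i, ξ i ω| ∂μ +
        ∑ i, ∫ ω, (|U ω - Ui i ω| + |V ω - Vi i ω|) * |ξ i ω| ∂μ := by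
  have hbound {δ : ℝ} := measureReal_sum_mem_Ioc_le_of_delta hξ hξ2 hmean hvar hindep hU hV
    hUi hVi hUM hVM hUiM hViM hloo (δ := δ) (z := z)
  have hUV : 0 ≤ ∫ ω, (U ω + V ω) * |∑ i, ξ i ω| ∂μ := integral_nonneg fun ω =>
    mul_nonneg (add_nonneg (hUM ω).1 (hVM ω).1) (abs_nonneg _)
  have hL : 0 ≤ ∑ i, ∫ ω, (|U ω - Ui i ω| + |V ω - Vi i ω|) * |ξ i ω| ∂μ :=
    Finset.sum_nonneg fun i _ => integral_nonneg fun ω => by positivity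
  set β := ∑ i, ∫ ω, lindebergTerm (ξ i ω) ∂μ
  have hβ0 : 0 ≤ β := Finset.sum_nonneg fun i _ => integral_nonneg fun ω => lindebergTerm_nonneg _
  rcases le_or_gt β (1 / 2) with hβ | hβ
  · rcases hβ0.lt_or_eq with hpos | hzero
    · linarith [hbound (δ := β / 2) (by positivity) (by linarith) (by linarith)]
    · -- with `β = 0` every `δ > 0` is admissible
      rw [← hzero, mul_zero, zero_add]
      refine le_of_forall_pos_le_add fun ε hε => ?_
      have := hbound (δ := min ε 1 / 4) (by positivity) (by linarith [min_le_right ε 1])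
        (by rw [← hzero]; positivity)
      linarith [min_le_left ε 1]
  · linarith [measureReal_le_one (μ := μ) (s := {ω | ∑ i, ξ i ω ∈ Set.Ioc (z - U ω) (z + V ω)})]

theorem measureReal_sum_mem_Ioc_truncPosPart_le (hξ : ∀ i, Measurable (ξ i))
    (hξ2 : ∀ i, MemLp (ξ i) 2 μ) (hmean : ∀ i, μ[ξ i] = 0) (hvar : ∑ i, ∫ ω, ξ i ω ^ 2 ∂μ = 1)
    (hindep : Pairwise fun i j => ξ i ⟂ᵢ[μ] ξ j)
    {Δ : Ω → ℝ} {Δi : ι → Ω → ℝ} (hΔ : Measurable Δ) (hΔi : ∀ i, Measurable (Δi i))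
    (hloo : ∀ i, ξ i ⟂ᵢ[μ] fun ω => (Δi i ω, ∑ j, ξ j ω - ξ i ω))
    (hWΔ : Integrable (fun ω => (∑ i, ξ i ω) * Δ ω) μ)
    (hξΔ : ∀ i, Integrable (fun ω => ξ i ω * (Δ ω - Δi i ω)) μ) (z : ℝ) (m : ℕ) :
    μ.real {ω | ∑ i, ξ i ω ∈ Set.Ioc (z - truncPosPart m (Δ ω)) (z + truncPosPart m (-Δ ω))} ≤
      2 * ∑ i, ∫ ω, lindebergTerm (ξ i ω) ∂μ + ∫ ω, |(∑ i, ξ i ω) * Δ ω| ∂μ +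
        ∑ i, ∫ ω, |ξ i ω * (Δ ω - Δi i ω)| ∂μ := by
  have hbdd := truncPosPart_mem_Icc (m.cast_nonneg : (0 : ℝ) ≤ m)
  have hφ : Measurable fun p : ℝ × ℝ => (truncPosPart m p.1, truncPosPart m (-p.1), p.2) := by
    fun_prop
  refine (measureReal_sum_mem_Ioc_le hξ hξ2 hmean hvar hindep (M := m)
    (U := fun ω => truncPosPart m (Δ ω)) (V := fun ω => truncPosPart m (-Δ ω))
    (Ui := fun i ω => truncPosPart m (Δi i ω)) (Vi := fun i ω => truncPosPart m (-Δi i ω))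
    (by fun_prop) (by fun_prop) (fun i => by fun_prop) (fun i => by fun_prop)
    (fun ω => hbdd _) (fun ω => hbdd _) (fun i ω => hbdd _) (fun i ω => hbdd _)
    (fun i => (hloo i).comp measurable_id hφ) z).trans ?_
  have hW : Integrable (fun ω => ∑ i, ξ i ω) μ :=
    integrable_finsetSum _ fun i _ => (hξ2 i).integrable one_le_two
  refine add_le_add (add_le_add le_rfl (integral_mono ?_ hWΔ.abs fun ω => ?_))
    (Finset.sum_le_sum fun i _ => integral_mono ?_ (hξΔ i).abs fun ω => ?_)
  · refine hW.abs.bdd_mul (c := 2 * m) (by fun_prop) (ae_of_all _ fun ω => ?_)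
    rw [Real.norm_of_nonneg (add_nonneg (hbdd _).1 (hbdd _).1)]
    linarith [(hbdd (Δ ω)).2, (hbdd (-Δ ω)).2]
  · rw [abs_mul, mul_comm |∑ i, ξ i ω|]
    exact mul_le_mul_of_nonneg_right (truncPosPart_add_truncPosPart_neg_le_abs _ _)
      (abs_nonneg _)
  · refine ((hξ2 i).integrable one_le_two).abs.bdd_mul (c := 2 * m) (by fun_prop)
      (ae_of_all _ fun ω => ?_)
    rw [Real.norm_of_nonneg (by positivity)]
    linarith [abs_sub_le_of_nonneg_of_le (hbdd (Δ ω)).1 (hbdd (Δ ω)).2 (hbdd (Δi i ω)).1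
      (hbdd (Δi i ω)).2, abs_sub_le_of_nonneg_of_le (hbdd (-Δ ω)).1 (hbdd (-Δ ω)).2
      (hbdd (-Δi i ω)).1 (hbdd (-Δi i ω)).2]
  · rw [abs_mul, mul_comm |ξ i ω|]
    exact mul_le_mul_of_nonneg_right (abs_truncPosPart_sub_add_le _ _ _) (abs_nonneg _)

end MeasureSpace

theorem concentration_inequality_beta_general {Ω : Type*} [MeasurableSpace Ω] (μ : Measure Ω)
    [IsProbabilityMeasure μ] (n : ℕ) (X : Fin n → Ω → ℝ) (g : Fin n → ℝ → ℝ)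
    (hmeasX : ∀ i, Measurable (X i)) (hmeasg : ∀ i, Measurable (g i))
    (hindep : iIndepFun X μ)
    (hint2 : ∀ i, Integrable (fun ω => (g i (X i ω)) ^ 2) μ)
    (hmean : ∀ i, ∫ ω, g i (X i ω) ∂μ = 0)
    (hvar : ∑ i, ∫ ω, (g i (X i ω)) ^ 2 ∂μ = 1)
    (W Δ T : Ω → ℝ) (hW : ∀ ω, W ω = ∑ i, g i (X i ω)) (hΔ : Measurable Δ)
    (hT : ∀ ω, T ω = W ω + Δ ω)
    (Δi : Fin n → Ω → ℝ) (hmeasΔi : ∀ i, Measurable (Δi i))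
    (hindepΔi : ∀ i, IndepFun (X i) (fun ω => (Δi i ω, W ω - g i (X i ω))) μ)
    (hintWΔ : Integrable (fun ω => W ω * Δ ω) μ)
    (hintgΔ : ∀ i, Integrable (fun ω => g i (X i ω) * (Δ ω - Δi i ω)) μ)
    (β : ℝ)
    (hβ : β = (∑ i, ∫ ω, (g i (X i ω)) ^ 2 *
          (if |g i (X i ω)| > 1 then (1 : ℝ) else 0) ∂μ) +
        ∑ i, ∫ ω, |g i (X i ω)| ^ 3 *
          (if |g i (X i ω)| ≤ 1 then (1 : ℝ) else 0) ∂μ) :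
    ∀ z : ℝ, |(μ {ω | T ω ≤ z}).toReal - (μ {ω | W ω ≤ z}).toReal| ≤
      2 * β + ∫ ω, |W ω * Δ ω| ∂μ + ∑ i, ∫ ω, |g i (X i ω) * (Δ ω - Δi i ω)| ∂μ := by
  intro z
  obtain rfl : W = fun ω => ∑ i, g i (X i ω) := funext hW
  obtain rfl : T = fun ω => (∑ i, g i (X i ω)) + Δ ω := funext hT
  have hξ : ∀ i, Measurable fun ω => g i (X i ω) := fun i => (hmeasg i).comp (hmeasX i)
  have hξ2 : ∀ i, MemLp (fun ω => g i (X i ω)) 2 μ := fun i =>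
    (memLp_two_iff_integrable_sq (hξ i).aestronglyMeasurable).2 (hint2 i)
  rw [← Finset.sum_add_distrib,
    ← Finset.sum_congr rfl fun i _ => integral_lindebergTerm (hξ i) (hξ2 i)] at hβ
  subst hβ
  have hmono : Monotone fun m : ℕ => {ω | ∑ i, g i (X i ω) ∈
      Set.Ioc (z - truncPosPart m (Δ ω)) (z + truncPosPart m (-Δ ω))} := fun m m' h ω hω =>
    ⟨by linarith [hω.1, monotone_truncPosPart (Δ ω) h],
      by linarith [hω.2, monotone_truncPosPart (-Δ ω) h]⟩
  refine (abs_measureReal_sub_le_measureReal_symmDiff (by measurability)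
    (by measurability)).trans (measureReal_le_of_subset_iUnion hmono
      (symmDiff_setOf_le_subset_iUnion _ _ z) fun m => ?_)
  exact measureReal_sum_mem_Ioc_truncPosPart_le hξ hξ2 hmean hvar
    (fun i j hij => (hindep.indepFun hij).comp (hmeasg i) (hmeasg j)) hΔ hmeasΔi
    (fun i => (hindepΔi i).comp (hmeasg i) measurable_id) hintWΔ hintgΔ z m

theorem concentration_inequality_beta {Ω : Type*} [MeasurableSpace Ω] (μ : Measure Ω)
    [IsProbabilityMeasure μ] (n : ℕ) (X : Fin n → Ω → ℝ) (g : Fin n → ℝ → ℝ)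
    (hmeasX : ∀ i, Measurable (X i)) (hmeasg : ∀ i, Measurable (g i))
    (hindep : iIndepFun X μ)
    (hint : ∀ i, Integrable (fun ω => g i (X i ω)) μ)
    (hint2 : ∀ i, Integrable (fun ω => (g i (X i ω)) ^ 2) μ)
    (hint3 : ∀ i, Integrable (fun ω => |g i (X i ω)| ^ 3) μ)
    (hmean : ∀ i, ∫ ω, g i (X i ω) ∂μ = 0)
    (hvar : ∑ i, ∫ ω, (g i (X i ω)) ^ 2 ∂μ = 1)
    (W Δ T : Ω → ℝ) (hW : ∀ ω, W ω = ∑ i, g i (X i ω)) (hΔ : Measurable Δ)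
    (hT : ∀ ω, T ω = W ω + Δ ω)
    (Δi : Fin n → Ω → ℝ) (hmeasΔi : ∀ i, Measurable (Δi i))
    (hindepΔi : ∀ i, IndepFun (X i) (fun ω => (Δi i ω, W ω - g i (X i ω))) μ)
    (hintWΔ : Integrable (fun ω => W ω * Δ ω) μ)
    (hintgΔ : ∀ i, Integrable (fun ω => g i (X i ω) * (Δ ω - Δi i ω)) μ)
    (β : ℝ)
    (hβ : β = (∑ i, ∫ ω, (g i (X i ω)) ^ 2 *
          (if |g i (X i ω)| > 1 then (1 : ℝ) else 0) ∂μ) +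
        ∑ i, ∫ ω, |g i (X i ω)| ^ 3 *
          (if |g i (X i ω)| ≤ 1 then (1 : ℝ) else 0) ∂μ) :
    ∀ z : ℝ, |(μ {ω | T ω ≤ z}).toReal - (μ {ω | W ω ≤ z}).toReal| ≤
      2 * β + ∫ ω, |W ω * Δ ω| ∂μ + ∑ i, ∫ ω, |g i (X i ω) * (Δ ω - Δi i ω)| ∂μ :=
  concentration_inequality_beta_general μ n X g hmeasX hmeasg hindep hint2 hmean hvar W Δ T hW hΔ hT
    Δi hmeasΔi hindepΔi hintWΔ hintgΔ β hβ
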